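/- Let A be row-regular (m×n over ℝ ∪ {-∞}), p nonzero, q all finite, and Δ = max_i (p_i - max_j(a_{ij}+q_j)). A finite vector x ∈ ℝ^n satisfies max_j(x_j - q_j) + max_i(p_i - max_j(a_{ij}+x_j)) = Δ if and only if there exists α ∈ ℝ such that max_j(x_j - q_j) = α and max_j(a_{ij} + x_j) ≥ α - Δ + p_i for all i. -/

import Mathlib

/-- The max-plus objective `q⁻ x (A x)⁻ p`. -/
noncomputable def tropObj (m n : ℕ) (a : Matrix (Fin m) (Fin n) EReal)
    (p : Fin m → EReal) (q x : Fin n → ℝ) : EReal :=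
  (⨆ j, ((x j - q j : ℝ) : EReal)) +
    ⨆ i, (p i - ⨆ j, (a i j + ((x j : ℝ) : EReal)))

/-- The minimum value `Δ = (A q)⁻ p`. -/
noncomputable def tropDelta (m n : ℕ) (a : Matrix (Fin m) (Fin n) EReal)
    (p : Fin m → EReal) (q : Fin n → ℝ) : EReal :=
  ⨆ i, (p i - ⨆ j, (a i j + ((q j : ℝ) : EReal)))

/-! Let `s = q⁻ x`. Since `x ≤ s q`, every row of `A x` is at most `s` plus the
corresponding row of `A q`, so `Δ ≤ s (A x)⁻ p`, i.e. `Δ` bounds the objective from below for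
every `x`. Hence `x` is a minimizer iff `s (A x)⁻ p ≤ Δ`, which unfolds row by row to
`A x ≥ s Δ⁻¹ p`; the `α` of the characterization can only be `s`. -/

namespace EReal

lemma sub_le_sub_coe_iff (s : ℝ) (p r d : EReal) : p - r ≤ d - s ↔ s - d + p ≤ r := by
  induction p <;> induction r <;> induction d <;>
    simp [← coe_sub, ← coe_add]
  constructor <;> intro <;> linarith

lemma sub_le_coe_add_sub {s : ℝ} {p r r' : EReal} (h : r ≤ r' + s) :
    p - r' ≤ s + (p - r) := by
  induction p <;> induction r <;> induction r' <;>
    simp_all [← coe_sub, ← coe_add]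
  linarith

lemma iSup_add_coe_le_iSup_add_coe_add {κ : Type*} (b : κ → EReal) {y z : κ → ℝ} {s : ℝ}
    (h : ∀ j, y j ≤ z j + s) : ⨆ j, (b j + y j) ≤ (⨆ j, (b j + z j)) + s :=
  iSup_le fun j => calc
    b j + y j ≤ b j + ((z j + s : ℝ) : EReal) := by gcongr; exact_mod_cast h j
    _ = (b j + z j) + s := by rw [coe_add, add_assoc]
    _ ≤ (⨆ j, (b j + z j)) + s := by gcongr; exact le_iSup (fun j => b j + z j) j

end EReal

section

variable {m n : ℕ} {a : Matrix (Fin m) (Fin n) EReal} {p : Fin m → EReal} {q x : Fin n → ℝ}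
  {s : ℝ}

lemma tropDelta_le_tropObj (hs : ⨆ j, ((x j - q j : ℝ) : EReal) = s) :
    tropDelta m n a p q ≤ tropObj m n a p q x := by
  have hxq (j : Fin n) : x j ≤ q j + s := by
    have : ((x j - q j : ℝ) : EReal) ≤ s := hs ▸ le_iSup (fun j => ((x j - q j : ℝ) : EReal)) j
    linarith [EReal.coe_le_coe_iff.1 this]
  rw [tropObj, hs]
  refine iSup_le fun i => ?_
  calc p i - ⨆ j, (a i j + ((q j : ℝ) : EReal))
      ≤ s + (p i - ⨆ j, (a i j + ((x j : ℝ) : EReal))) :=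
        EReal.sub_le_coe_add_sub (EReal.iSup_add_coe_le_iSup_add_coe_add (a i) hxq)
    _ ≤ s + ⨆ i, (p i - ⨆ j, (a i j + ((x j : ℝ) : EReal))) := by
        gcongr
        exact le_iSup (fun i => p i - ⨆ j, (a i j + ((x j : ℝ) : EReal))) i

lemma tropObj_le_tropDelta_iff (hs : ⨆ j, ((x j - q j : ℝ) : EReal) = s) :
    tropObj m n a p q x ≤ tropDelta m n a p q ↔
      ∀ i, (s : EReal) - tropDelta m n a p q + p i ≤ ⨆ j, (a i j + ((x j : ℝ) : EReal)) := by
  rw [tropObj, hs, add_comm,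
    ← EReal.le_sub_iff_add_le (.inl (EReal.coe_ne_bot s)) (.inl (EReal.coe_ne_top s)),
    iSup_le_iff]
  exact forall_congr' fun i => EReal.sub_le_sub_coe_iff s _ _ _

end

theorem tropObj_minimizer_characterization_general (m n : ℕ) (a : Matrix (Fin m) (Fin n) EReal)
    (harow : ∀ i, ∃ j, a i j ≠ ⊥)
    (p : Fin m → EReal) (hp : ∃ i, p i ≠ ⊥)
    (q : Fin n → ℝ) (x : Fin n → ℝ) :
    tropObj m n a p q x = tropDelta m n a p q ↔
      ∃ α : ℝ, (⨆ j, ((x j - q j : ℝ) : EReal)) = (α : EReal) ∧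
        ∀ i, (α : EReal) - tropDelta m n a p q + p i ≤
          ⨆ j, (a i j + ((x j : ℝ) : EReal)) := by
  obtain ⟨i₀, -⟩ := hp
  obtain ⟨j₀, -⟩ := harow i₀
  have : Nonempty (Fin n) := ⟨j₀⟩
  obtain ⟨j, hs⟩ := exists_eq_ciSup_of_finite (f := fun j => ((x j - q j : ℝ) : EReal))
  rw [le_antisymm_iff, and_iff_left (tropDelta_le_tropObj hs.symm),
    tropObj_le_tropDelta_iff hs.symm, ← hs]
  simp only [EReal.coe_eq_coe_iff, exists_eq_left']

/-- Characterization of minimizers: `x` attains the minimum `Δ` iff for some real `α`,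
`q⁻ x = α` and `A x ≥ α Δ⁻¹ p`. -/
theorem tropObj_minimizer_characterization (m n : ℕ) (a : Matrix (Fin m) (Fin n) EReal)
    (hatop : ∀ i j, a i j ≠ ⊤) (harow : ∀ i, ∃ j, a i j ≠ ⊥)
    (p : Fin m → EReal) (hptop : ∀ i, p i ≠ ⊤) (hp : ∃ i, p i ≠ ⊥)
    (q : Fin n → ℝ) (x : Fin n → ℝ) :
    tropObj m n a p q x = tropDelta m n a p q ↔
      ∃ α : ℝ, (⨆ j, ((x j - q j : ℝ) : EReal)) = (α : EReal) ∧
        ∀ i, (α : EReal) - tropDelta m n a p q + p i ≤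
          ⨆ j, (a i j + ((x j : ℝ) : EReal)) :=
  tropObj_minimizer_characterization_general m n a harow p hp q x
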